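/- Under the hypotheses of Theorem 3 with σ ∈ [0,1), the iterates satisfy the cumulative movement bound Σ_{i=1}^k (A_i/λ_i) ‖y_i − x̃_{i−1}‖² ≤ ‖x_0 − x_*‖²/(1 − σ²), where x_* is a minimizer of F. -/

import Mathlib

open Finset

section aux
open RealInnerProductSpace

lemma grad_ineq {d : ℕ} (F : EuclideanSpace ℝ (Fin d) → ℝ)
    (hF : ConvexOn ℝ Set.univ F) (hFd : Differentiable ℝ F)
    (p q : EuclideanSpace ℝ (Fin d)) :
    F p + ⟪gradient F p, q - p⟫ ≤ F q := by
  set φ : ℝ → ℝ := fun t => F (p + t • (q - p)) with hφ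
  have hconv : ConvexOn ℝ Set.univ φ := by
    have h := hF.comp_affineMap (AffineMap.lineMap p q)
    have : (F ∘ AffineMap.lineMap p q) = φ := by
      funext t
      simp [φ, AffineMap.lineMap_apply, add_comm, vsub_eq_sub, vadd_eq_add]
    rw [this] at h
    simpa using h
  have hc : HasDerivAt (fun t : ℝ => p + t • (q - p)) (q - p) 0 := by
    simpa using ((hasDerivAt_id (0:ℝ)).smul_const (q - p)).const_add p
  have hgrad : HasFDerivAt F (InnerProductSpace.toDual ℝ _ (gradient F p)) p :=
    hasGradientAt_iff_hasFDerivAt.mp (hFd p).hasGradientAt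
  have hgrad' : HasFDerivAt F (InnerProductSpace.toDual ℝ _ (gradient F p))
      (p + (0:ℝ) • (q - p)) := by simpa using hgrad
  have hderiv : HasDerivAt φ ⟪gradient F p, q - p⟫ 0 := by
    have h := hgrad'.comp_hasDerivAt 0 hc
    rw [InnerProductSpace.toDual_apply_apply] at h
    exact h
  have hslope := hconv.le_slope_of_hasDerivAt (Set.mem_univ (0:ℝ)) (Set.mem_univ (1:ℝ))
    zero_lt_one hderiv
  have h0 : φ 0 = F p := by simp [φ]
  have h1 : φ 1 = F q := by simp [φ]
  rw [slope_def_field] at hslope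
  simp only [sub_zero, div_one, h0, h1] at hslope
  linarith [hslope]

end aux

set_option maxHeartbeats 1000000

theorem accelerated_meta_algorithm_movement
    (d : ℕ)
    (F : EuclideanSpace ℝ (Fin d) → ℝ)
    (hF : ConvexOn ℝ Set.univ F)
    (hFd : Differentiable ℝ F)
    (x0 : EuclideanSpace ℝ (Fin d))
    (y : ℕ → EuclideanSpace ℝ (Fin d))
    (lam a A : ℕ → ℝ)
    (hlam : ∀ i, 1 ≤ i → 0 < lam i)
    (hapos : ∀ i, 1 ≤ i → 0 < a i)
    (hA : ∀ k, A k = ∑ i ∈ Finset.Icc 1 k, a i)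
    (hcoupling : ∀ k, 1 ≤ k → lam k * A k = a k ^ 2)
    (x : ℕ → EuclideanSpace ℝ (Fin d))
    (hx : ∀ k, x k = x0 - ∑ i ∈ Finset.Icc 1 k, a i • gradient F (y i))
    (xt : ℕ → EuclideanSpace ℝ (Fin d))
    (hxt : ∀ k, xt k = (a (k + 1) / A (k + 1)) • x k + (A k / A (k + 1)) • y k)
    (σ : ℝ) (hσ0 : 0 ≤ σ) (hσ1 : σ < 1)
    (happrox : ∀ k, ‖y (k + 1) - (xt k - lam (k + 1) • gradient F (y (k + 1)))‖
      ≤ σ * ‖y (k + 1) - xt k‖)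
    (xstar : EuclideanSpace ℝ (Fin d))
    (hmin : ∀ z, F xstar ≤ F z) :
    ∀ k : ℕ,
      ∑ i ∈ Finset.Icc 1 k, A i / lam i * ‖y i - xt (i - 1)‖ ^ 2
        ≤ ‖x0 - xstar‖ ^ 2 / (1 - σ ^ 2) := by
  have hσ2 : 0 < 1 - σ ^ 2 := by nlinarith
  have hAnn : ∀ k, 0 ≤ A k := by
    intro k
    rw [hA k]
    exact Finset.sum_nonneg fun i hi => (hapos i (Finset.mem_Icc.mp hi).1).le
  have hApos : ∀ k, 0 < A (k + 1) := by
    intro k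
    rw [hA (k + 1)]
    apply Finset.sum_pos (fun i hi => hapos i (Finset.mem_Icc.mp hi).1)
    exact ⟨1, Finset.mem_Icc.mpr ⟨le_refl 1, Nat.le_add_left 1 k⟩⟩
  set E : ℕ → ℝ := fun k => A k * (F (y k) - F xstar) + ‖x k - xstar‖ ^ 2 / 2 with hE
  have hEnn : ∀ k, 0 ≤ E k := by
    intro k
    have h1 : 0 ≤ A k * (F (y k) - F xstar) :=
      mul_nonneg (hAnn k) (by linarith [hmin (y k)])
    have h2 : (0:ℝ) ≤ ‖x k - xstar‖ ^ 2 / 2 := by positivity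
    simp only [hE]; linarith
  have hE0 : E 0 = ‖x0 - xstar‖ ^ 2 / 2 := by
    have hA0 : A 0 = 0 := by rw [hA 0]; simp
    have hx0 : x 0 = x0 := by rw [hx 0]; simp
    simp [hE, hA0, hx0]
  -- the one-step inequality
  have hstep : ∀ k : ℕ, E (k + 1) + (1 - σ ^ 2) / 2 *
      (A (k + 1) / lam (k + 1) * ‖y (k + 1) - xt k‖ ^ 2) ≤ E k := by
    intro k
    set g := gradient F (y (k + 1)) with hg
    set v := y (k + 1) - xt k with hv
    have hlamp : 0 < lam (k + 1) := hlam (k + 1) (Nat.le_add_left 1 k)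
    have hap : 0 < a (k + 1) := hapos (k + 1) (Nat.le_add_left 1 k)
    have hA1pos := hApos k
    have hA1 : A (k + 1) = A k + a (k + 1) := by
      rw [hA (k + 1), hA k, Finset.sum_Icc_succ_top (Nat.le_add_left 1 k)]
    have hcoup : lam (k + 1) * A (k + 1) = a (k + 1) ^ 2 :=
      hcoupling (k + 1) (Nat.le_add_left 1 k)
    -- recursion for x
    have hx1 : x (k + 1) = x k - a (k + 1) • g := by
      rw [hx (k + 1), hx k, Finset.sum_Icc_succ_top (Nat.le_add_left 1 k)]
      abel
    -- A (k+1) • xt k = a (k+1) • x k + A k • y k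
    have h6 : A (k + 1) • xt k = a (k + 1) • x k + A k • y k := by
      rw [hxt k, smul_add, smul_smul, smul_smul,
        show A (k + 1) * (a (k + 1) / A (k + 1)) = a (k + 1) by
          field_simp,
        show A (k + 1) * (A k / A (k + 1)) = A k by field_simp]
    -- vector identity
    have hvec : A k • (y (k + 1) - y k) + a (k + 1) • (y (k + 1) - x k)
        = A (k + 1) • v := by
      rw [hv, smul_sub, smul_sub, smul_sub, h6, hA1, add_smul]
      abel
    -- subgradient inequalities
    have f1 : F (y (k + 1)) - F (y k) ≤ inner ℝ g (y (k + 1) - y k) := by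
      have := grad_ineq F hF hFd (y (k + 1)) (y k)
      have hcomm : (inner ℝ g (y k - y (k + 1)) : ℝ) = - inner ℝ g (y (k + 1) - y k) := by
        rw [show y k - y (k + 1) = -(y (k + 1) - y k) by abel, inner_neg_right]
      rw [hg] at *
      linarith [this, hcomm.le, hcomm.ge]
    have f2 : F (y (k + 1)) - F xstar ≤ inner ℝ g (y (k + 1) - xstar) := by
      have := grad_ineq F hF hFd (y (k + 1)) xstar
      have hcomm : (inner ℝ g (xstar - y (k + 1)) : ℝ) = - inner ℝ g (y (k + 1) - xstar) := by
        rw [show xstar - y (k + 1) = -(y (k + 1) - xstar) by abel, inner_neg_right]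
      linarith [this, hcomm.le, hcomm.ge]
    -- norm expansion for x update
    have f4 : ‖x (k + 1) - xstar‖ ^ 2 = ‖x k - xstar‖ ^ 2
        - 2 * (a (k + 1) * inner ℝ g (x k - xstar)) + a (k + 1) ^ 2 * ‖g‖ ^ 2 := by
      have : x (k + 1) - xstar = (x k - xstar) - a (k + 1) • g := by rw [hx1]; abel
      rw [this, norm_sub_sq_real, real_inner_smul_right, norm_smul, Real.norm_eq_abs,
        mul_pow, sq_abs, real_inner_comm (x k - xstar) g]
      try ring
    -- inner identity from hvec
    have f7 : A k * inner ℝ g (y (k + 1) - y k) + a (k + 1) * inner ℝ g (y (k + 1) - x k)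
        = A (k + 1) * inner ℝ g v := by
      have h := congrArg (fun w => (inner ℝ g w : ℝ)) hvec
      simp only [inner_add_right, real_inner_smul_right] at h
      exact h
    have f7' : (inner ℝ g (y (k + 1) - x k) : ℝ)
        = inner ℝ g (y (k + 1) - xstar) - inner ℝ g (x k - xstar) := by
      rw [show y (k + 1) - x k = (y (k + 1) - xstar) - (x k - xstar) by abel,
        inner_sub_right]
    -- approximation inequality squared
    have f8 : 2 * lam (k + 1) * inner ℝ g v + lam (k + 1) ^ 2 * ‖g‖ ^ 2
        ≤ σ ^ 2 * ‖v‖ ^ 2 - ‖v‖ ^ 2 := by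
      have happ := happrox k
      have heq : y (k + 1) - (xt k - lam (k + 1) • g) = v + lam (k + 1) • g := by
        rw [hv]; abel
      rw [heq] at happ
      have hsq : ‖v + lam (k + 1) • g‖ ^ 2 ≤ σ ^ 2 * ‖v‖ ^ 2 := by
        have h2 := mul_le_mul happ happ (norm_nonneg _) (by positivity)
        calc ‖v + lam (k + 1) • g‖ ^ 2 = ‖v + lam (k + 1) • g‖ * ‖v + lam (k + 1) • g‖ := sq _
        _ ≤ (σ * ‖v‖) * (σ * ‖v‖) := h2
        _ = σ ^ 2 * ‖v‖ ^ 2 := by ring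
      have hexp : ‖v + lam (k + 1) • g‖ ^ 2
          = ‖v‖ ^ 2 + 2 * (lam (k + 1) * inner ℝ g v) + lam (k + 1) ^ 2 * ‖g‖ ^ 2 := by
        rw [norm_add_sq_real, real_inner_smul_right, norm_smul, Real.norm_eq_abs,
          mul_pow, sq_abs, real_inner_comm v g]
        try ring
      nlinarith [hsq, hexp]
    -- key inequality
    have key0 : 2 * lam (k + 1) * inner ℝ g v + lam (k + 1) ^ 2 * ‖g‖ ^ 2
        + (1 - σ ^ 2) * ‖v‖ ^ 2 ≤ 0 := by linarith
    have key : A (k + 1) * inner ℝ g v + lam (k + 1) * A (k + 1) / 2 * ‖g‖ ^ 2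
        + (1 - σ ^ 2) / 2 * (A (k + 1) / lam (k + 1)) * ‖v‖ ^ 2 ≤ 0 := by
      have hmul : A (k + 1) / (2 * lam (k + 1)) *
          (2 * lam (k + 1) * inner ℝ g v + lam (k + 1) ^ 2 * ‖g‖ ^ 2
            + (1 - σ ^ 2) * ‖v‖ ^ 2) ≤ 0 :=
        mul_nonpos_of_nonneg_of_nonpos (by positivity) key0
      have hexp : A (k + 1) / (2 * lam (k + 1)) *
          (2 * lam (k + 1) * inner ℝ g v + lam (k + 1) ^ 2 * ‖g‖ ^ 2
            + (1 - σ ^ 2) * ‖v‖ ^ 2)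
          = A (k + 1) * inner ℝ g v + lam (k + 1) * A (k + 1) / 2 * ‖g‖ ^ 2
            + (1 - σ ^ 2) / 2 * (A (k + 1) / lam (k + 1)) * ‖v‖ ^ 2 := by
        field_simp
      linarith [hexp ▸ hmul]
    -- assemble
    have s1 : A k * (F (y (k + 1)) - F (y k)) ≤ A k * inner ℝ g (y (k + 1) - y k) :=
      mul_le_mul_of_nonneg_left f1 (hAnn k)
    have s2 : a (k + 1) * (F (y (k + 1)) - F xstar)
        ≤ a (k + 1) * inner ℝ g (y (k + 1) - xstar) :=
      mul_le_mul_of_nonneg_left f2 hap.le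
    have hsplit : A (k + 1) * (F (y (k + 1)) - F xstar)
        = A k * (F (y (k + 1)) - F (y k)) + a (k + 1) * (F (y (k + 1)) - F xstar)
          + A k * (F (y k) - F xstar) := by rw [hA1]; ring
    have f9G : a (k + 1) ^ 2 * ‖g‖ ^ 2 = lam (k + 1) * A (k + 1) * ‖g‖ ^ 2 := by
      rw [hcoup]
    simp only [hE]
    rw [f7'] at f7
    linarith [s1, s2, key, f4, f7, f9G, hsplit]
  -- sum via induction
  have hsum : ∀ k : ℕ, (1 - σ ^ 2) / 2 *
      (∑ i ∈ Finset.Icc 1 k, A i / lam i * ‖y i - xt (i - 1)‖ ^ 2) + E k ≤ E 0 := by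
    intro k
    induction k with
    | zero => simp
    | succ n ih =>
      rw [Finset.sum_Icc_succ_top (Nat.le_add_left 1 n)]
      have := hstep n
      simp only [Nat.add_sub_cancel] at *
      linarith
  intro k
  have h := hsum k
  rw [hE0] at h
  have hk := hEnn k
  rw [le_div_iff₀ hσ2]
  obtain ⟨S, hS⟩ : ∃ S, S = ∑ i ∈ Finset.Icc 1 k, A i / lam i * ‖y i - xt (i - 1)‖ ^ 2 :=
    ⟨_, rfl⟩
  obtain ⟨e, he⟩ : ∃ e, e = E k := ⟨_, rfl⟩
  obtain ⟨N, hN⟩ : ∃ N, N = ‖x0 - xstar‖ ^ 2 := ⟨_, rfl⟩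
  rw [← hS, ← hN]
  rw [← hS, ← he, ← hN] at h
  rw [← he] at hk
  linarith
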